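/- Let r be an integer with 6 ≤ r ≤ 12, and let x₂, …, x_{r−4} be nonnegative real numbers satisfying Σ_{j=2}^{r−4} ( (C(r,2) − C(r−j,2)) / C(r,2) ) · x_j ≤ 1, where C(a,2) = a(a−1)/2. Then ∏_{j=2}^{r−4} j^{x_j} ≤ Y(r), where Y(6) = 2^{5/3}, Y(7) = 3^{7/5}, Y(8) = 4^{14/11}, Y(9) = 5^{6/5}, Y(10) = 4^{3/2}, Y(11) = 4^{55/34}, and Y(12) = 3^{11/5}. -/

import Mathlib

/-!
The bound is weak duality for the linear program. With `c_j = (C(r,2) - C(r-j,2)) / C(r,2)`,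
the value `y(r) = ln Y(r)` is dual feasible: `ln j ≤ c_j · y(r)` for every `2 ≤ j ≤ r - 4`, so
`∑ x_j ln j ≤ y(r) ∑ c_j x_j ≤ y(r)`. Writing `Y(r) = b ^ (p / q)`, dual feasibility becomes the
integer inequality `j ^ (C(r,2) q) ≤ b ^ (p (C(r,2) - C(r-j,2)))`, which is checked by evaluation.
-/

/-- The optimal values `Y(r)` of the linear program for `6 ≤ r ≤ 12`. -/
noncomputable def Y : ℕ → ℝ
  | 6 => (2 : ℝ) ^ ((5 : ℝ) / 3)
  | 7 => (3 : ℝ) ^ ((7 : ℝ) / 5)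
  | 8 => (4 : ℝ) ^ ((14 : ℝ) / 11)
  | 9 => (5 : ℝ) ^ ((6 : ℝ) / 5)
  | 10 => (4 : ℝ) ^ ((3 : ℝ) / 2)
  | 11 => (4 : ℝ) ^ ((55 : ℝ) / 34)
  | 12 => (3 : ℝ) ^ ((11 : ℝ) / 5)
  | _ => 0

open Finset Real

theorem Real.le_rpow_div_of_pow_le_pow {a b : ℝ} {m n : ℕ} (ha : 0 ≤ a) (hb : 0 ≤ b) (hn : 0 < n)
    (h : a ^ n ≤ b ^ m) : a ≤ b ^ ((m : ℝ) / n) := by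
  rw [div_eq_mul_inv, rpow_natCast_mul hb, le_rpow_inv_iff_of_pos ha (by positivity)
    (by exact_mod_cast hn), rpow_natCast]
  exact h

theorem Finset.prod_rpow_le_of_le_rpow {ι : Type*} {s : Finset ι} {f c x : ι → ℝ} {Y : ℝ}
    (hY : 1 ≤ Y) (hx : ∀ i ∈ s, 0 ≤ x i) (hf : ∀ i ∈ s, 0 ≤ f i) (hfc : ∀ i ∈ s, f i ≤ Y ^ c i)
    (h : ∑ i ∈ s, c i * x i ≤ 1) :
    ∏ i ∈ s, f i ^ x i ≤ Y := by
  have hY0 : 0 < Y := one_pos.trans_le hY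
  calc ∏ i ∈ s, f i ^ x i ≤ ∏ i ∈ s, Y ^ (c i * x i) := by
        refine prod_le_prod (fun i hi => rpow_nonneg (hf i hi) _) fun i hi => ?_
        rw [rpow_mul hY0.le]
        exact rpow_le_rpow (hf i hi) (hfc i hi) (hx i hi)
    _ = Y ^ ∑ i ∈ s, c i * x i := (rpow_sum_of_pos hY0 _ s).symm
    _ ≤ Y ^ (1 : ℝ) := rpow_le_rpow_of_exponent_le hY h
    _ = Y := rpow_one Y

theorem natCast_le_rpow_rpow_of_pow_le_pow {j b p q N M : ℕ} (hq : 0 < q) (hN : 0 < N)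
    (hMN : M ≤ N) (h : j ^ (N * q) ≤ b ^ (p * (N - M))) :
    (j : ℝ) ≤ ((b : ℝ) ^ ((p : ℝ) / q)) ^ (((N : ℝ) - M) / N) := by
  have hexp : (p : ℝ) / q * (((N : ℝ) - M) / N) = ((p * (N - M) : ℕ) : ℝ) / (N * q : ℕ) := by
    push_cast [Nat.cast_sub hMN]
    field_simp
  rw [← rpow_mul b.cast_nonneg, hexp]
  exact le_rpow_div_of_pow_le_pow j.cast_nonneg b.cast_nonneg (Nat.mul_pos hN hq)
    (by exact_mod_cast h)

theorem exists_rpow_eq_Y_and_dual_feasible {r : ℕ} (hr6 : 6 ≤ r) (hr12 : r ≤ 12) :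
    ∃ b p q : ℕ, 1 ≤ b ∧ 0 < q ∧ Y r = (b : ℝ) ^ ((p : ℝ) / q) ∧
      ∀ j ∈ Icc 2 (r - 4), j ^ (r.choose 2 * q) ≤ b ^ (p * (r.choose 2 - (r - j).choose 2)) := by
  interval_cases r
  · exact ⟨2, 5, 3, by norm_num, by norm_num, by norm_num [Y], by decide +kernel⟩
  · exact ⟨3, 7, 5, by norm_num, by norm_num, by norm_num [Y], by decide +kernel⟩
  · exact ⟨4, 14, 11, by norm_num, by norm_num, by norm_num [Y], by decide +kernel⟩
  · exact ⟨5, 6, 5, by norm_num, by norm_num, by norm_num [Y], by decide +kernel⟩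
  · exact ⟨4, 3, 2, by norm_num, by norm_num, by norm_num [Y], by decide +kernel⟩
  · exact ⟨4, 55, 34, by norm_num, by norm_num, by norm_num [Y], by decide +kernel⟩
  · exact ⟨3, 11, 5, by norm_num, by norm_num, by norm_num [Y], by decide +kernel⟩

theorem stmt18 (r : ℕ) (hr6 : 6 ≤ r) (hr12 : r ≤ 12) (x : ℕ → ℝ)
    (hx : ∀ j ∈ Finset.Icc 2 (r - 4), 0 ≤ x j)
    (h1 : ∑ j ∈ Finset.Icc 2 (r - 4),
        (((r.choose 2 : ℝ) - ((r - j).choose 2 : ℝ)) / (r.choose 2 : ℝ)) * x j ≤ 1) :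
    ∏ j ∈ Finset.Icc 2 (r - 4), (j : ℝ) ^ (x j) ≤ Y r := by
  obtain ⟨b, p, q, hb, hq, hY, hfeasible⟩ := exists_rpow_eq_Y_and_dual_feasible hr6 hr12
  have hY1 : 1 ≤ Y r := hY ▸ one_le_rpow (by exact_mod_cast hb) (by positivity)
  refine prod_rpow_le_of_le_rpow hY1 hx (fun j _ => j.cast_nonneg) (fun j hj => ?_) h1
  rw [hY]
  exact natCast_le_rpow_rpow_of_pow_le_pow hq (Nat.choose_pos (by omega))
    (Nat.choose_le_choose 2 (Nat.sub_le r j)) (hfeasible j hj)
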